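/- Let b ≥ 2 and τ ∈ {τ^b_2, τ^b_3}, and let φ be an instance of cubic monotone one-in-three 3-SAT with m clauses. If φ has a one-in-three model, then there is a τ-region (sup, sig) of the translator T_τ such that sig(z) = 0 (the group event 0) and sig(k) = (0,1). -/

import Mathlib

/-! ## Transition systems -/

/-- A transition system over ambient state type `S` and event type `E`:
a set of states, a set of events, and a (deterministic or not) labeled
transition relation whose transitions stay inside the state/event sets. -/
structure TS (S E : Type) where
  states : Set S
  events : Set E
  tr : S → E → S → Prop
  tr_mem : ∀ ⦃s e s'⦄, tr s e s' → s ∈ states ∧ e ∈ events ∧ s' ∈ states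

/-- Event `e` occurs at state `s`. -/
def TS.occurs {S E : Type} (A : TS S E) (e : E) (s : S) : Prop := ∃ s', A.tr s e s'

/-! ## The types of nets `τ^b_t`, `t ∈ {0,1,2,3}` -/

/-- Events of the types of nets: pairs `(m,n)` or group events `c ∈ ℤ_{b+1}`. -/
inductive Tev where
  | pr (m n : ℕ)
  | gr (c : ℕ)
deriving DecidableEq

def Tev.minus : Tev → ℕ | .pr m _ => m | .gr _ => 0
def Tev.plus : Tev → ℕ | .pr _ n => n | .gr _ => 0
def Tev.absv : Tev → ℕ | .pr _ _ => 0 | .gr c => c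

/-- Membership in the event set of the type `τ^b_t`:
for `t ∈ {1,3}` (pure types) the pair events `(m,n)` with `m,n ≥ 1` are discarded;
for `t ∈ {2,3}` the pair `(0,0)` is discarded and the group events `0,…,b` are present;
for `t ∈ {0,1}` there are no group events. -/
def tevOk (b t : ℕ) : Tev → Prop
  | .pr m n => m ≤ b ∧ n ≤ b ∧ ((t = 1 ∨ t = 3) → (m = 0 ∨ n = 0)) ∧
      ((t = 2 ∨ t = 3) → ¬(m = 0 ∧ n = 0))
  | .gr c => c ≤ b ∧ (t = 2 ∨ t = 3)

/-- The partial transition function of the types `τ^b_t` on the states `{0,…,b}`. -/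
def tevStep (b s : ℕ) : Tev → Option ℕ
  | .pr m n => if m ≤ s ∧ s - m + n ≤ b then some (s - m + n) else none
  | .gr c => some ((s + c) % (b + 1))

/-! ## Regions, ESSP and SSP -/

/-- A `τ^b_t`-region of a transition system `A`. -/
structure Region (b t : ℕ) {S E : Type} (A : TS S E) where
  sup : S → ℕ
  sig : E → Tev
  sup_le : ∀ s ∈ A.states, sup s ≤ b
  sig_ok : ∀ e ∈ A.events, tevOk b t (sig e)
  resp : ∀ ⦃s e s'⦄, A.tr s e s' → tevStep b (sup s) (sig e) = some (sup s')

/-- A region solves the ESSP atom `(e,s)` if `sig e` does not occur at `sup s` in `τ`. -/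
def Region.solvesESSP {b t : ℕ} {S E : Type} {A : TS S E} (R : Region b t A)
    (e : E) (s : S) : Prop :=
  tevStep b (R.sup s) (R.sig e) = none

/-- A region solves the SSP atom `(s,s')` if `sup s ≠ sup s'`. -/
def Region.solvesSSP {b t : ℕ} {S E : Type} {A : TS S E} (R : Region b t A)
    (s s' : S) : Prop :=
  R.sup s ≠ R.sup s'

/-- `A` has the `τ^b_t`-ESSP: every ESSP atom is solvable. -/
def TS.hasESSP (b t : ℕ) {S E : Type} (A : TS S E) : Prop :=
  ∀ e ∈ A.events, ∀ s ∈ A.states, ¬ A.occurs e s → ∃ R : Region b t A, R.solvesESSP e s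

/-- `A` has the `τ^b_t`-SSP: every SSP atom is solvable. -/
def TS.hasSSP (b t : ℕ) {S E : Type} (A : TS S E) : Prop :=
  ∀ s ∈ A.states, ∀ s' ∈ A.states, s ≠ s' → ∃ R : Region b t A, R.solvesSSP s s'

/-- `A` is `τ^b_t`-feasible. -/
def TS.feasible (b t : ℕ) {S E : Type} (A : TS S E) : Prop :=
  A.hasESSP b t ∧ A.hasSSP b t

/-! ## Combinators: linear TSs, relabeled states, unions -/

/-- The linear TS given by the word `w`: states `0,…,w.length`, and an
`e`-labeled transition from `s` to `s+1` whenever `w[s] = e`. -/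
def TS.chain {E : Type} (w : List E) : TS ℕ E where
  states := {s | s ≤ w.length}
  events := {e | e ∈ w}
  tr s e s' := w[s]? = some e ∧ s' = s + 1
  tr_mem := by
    rintro s e s' ⟨h, rfl⟩
    have hs : s < w.length := by
      by_contra hc
      rw [List.getElem?_eq_none (Nat.le_of_not_lt hc)] at h
      cases h
    obtain ⟨hlt, rfl⟩ := List.getElem?_eq_some_iff.mp h
    exact ⟨Nat.le_of_lt hs, List.getElem_mem hlt, hs⟩

/-- Renaming the states of a TS along `f`. -/
def TS.mapStates {S S' E : Type} (f : S → S') (A : TS S E) : TS S' E where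
  states := f '' A.states
  events := A.events
  tr s e s' := ∃ a a', A.tr a e a' ∧ s = f a ∧ s' = f a'
  tr_mem := by
    rintro s e s' ⟨a, a', h, rfl, rfl⟩
    obtain ⟨h1, h2, h3⟩ := A.tr_mem h
    exact ⟨⟨a, h1, rfl⟩, h2, ⟨a', h3, rfl⟩⟩

/-- The union `U(A_i)_{i : ι}` of a family of TSs over the same ambient types. -/
def TS.unionFam {ι S E : Type} (F : ι → TS S E) : TS S E where
  states := ⋃ i, (F i).states
  events := ⋃ i, (F i).events
  tr s e s' := ∃ i, (F i).tr s e s'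
  tr_mem := by
    rintro s e s' ⟨i, h⟩
    obtain ⟨h1, h2, h3⟩ := (F i).tr_mem h
    exact ⟨Set.mem_iUnion.2 ⟨i, h1⟩, Set.mem_iUnion.2 ⟨i, h2⟩, Set.mem_iUnion.2 ⟨i, h3⟩⟩

/-- The SSP for a union: all SSP atoms given by distinct states of the *same*
constituent are solvable by regions of the union. -/
def unionSSP (b t : ℕ) {ι S E : Type} (F : ι → TS S E) : Prop :=
  ∀ i : ι, ∀ s ∈ (F i).states, ∀ s' ∈ (F i).states, s ≠ s' →
    ∃ R : Region b t (TS.unionFam F), R.solvesSSP s s'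
/-! ## Cubic monotone one-in-three 3-SAT -/

/-- An instance `φ = {C_0,…,C_{m-1}}` of cubic monotone one-in-three 3-SAT with
variables `V(φ) = {X_0,…,X_{m-1}}` (identified with `Fin m`): every clause
`C_i = {X_{i,0}, X_{i,1}, X_{i,2}}` consists of three distinct variables and every
variable occurs in exactly three clauses. -/
structure SatInstance (m : ℕ) where
  C : Fin m → Fin 3 → Fin m
  clause_distinct : ∀ i : Fin m, Function.Injective (C i)
  cubic : ∀ v : Fin m,
    (Finset.univ.filter (fun p : Fin m × Fin 3 => C p.1 p.2 = v)).card = 3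

/-- `M` is a one-in-three model of `φ`: every clause contains exactly one variable of `M`. -/
def SatInstance.model {m : ℕ} (φ : SatInstance m) (M : Set (Fin m)) : Prop :=
  ∀ i : Fin m, ∃! r : Fin 3, φ.C i r ∈ M

/-! ## Events of the gadgets -/

inductive Ev where
  | k | z | z0 | z1 | o0 | o1 | o2 | u
  | kj (j : ℕ)  -- the interface events k_j
  | x (i : ℕ)   -- the events x_i
  | p (i : ℕ)   -- the events p_i
  | vj (j : ℕ)  -- the events v_j
  | X (v : ℕ)   -- the variable events X_v
deriving DecidableEq

/-! ## The gadget TSs (states are pairs (tag, position)) -/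

/-- `H_0`, with `h_{0,i} = (0,i)`. -/
def H0 (b : ℕ) : TS (ℕ × ℕ) Ev :=
  (TS.chain (List.replicate b Ev.k ++ List.replicate b Ev.z ++ [Ev.o0] ++
    List.replicate b Ev.k ++ List.replicate b Ev.z ++ List.replicate b Ev.o1 ++
    List.replicate b Ev.k)).mapStates (fun i => (0, i))

/-- `H_1`, with `h_{1,i} = (0,i)`. -/
def H1 (b : ℕ) : TS (ℕ × ℕ) Ev :=
  (TS.chain (List.replicate b Ev.k ++ [Ev.z0, Ev.o0] ++ List.replicate b Ev.k ++
    [Ev.z1, Ev.z0, Ev.o2] ++ List.replicate b Ev.k)).mapStates (fun i => (0, i))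

/-- `H_2`, with `h_{2,i} = (0,i)`. -/
def H2 (b : ℕ) : TS (ℕ × ℕ) Ev :=
  (TS.chain (List.replicate b Ev.k ++ [Ev.o0] ++ List.replicate b Ev.k ++
    [Ev.o2] ++ List.replicate b Ev.k)).mapStates (fun i => (0, i))

/-- `D_{j,0}`, with `d_{j,0,i} = (j+1,i)`. -/
def D0 (b j : ℕ) : TS (ℕ × ℕ) Ev :=
  (TS.chain ([Ev.o0, Ev.kj j] ++ List.replicate (b+1) Ev.o1)).mapStates
    (fun i => (j + 1, i))

/-- `D_{j,1}`, with `d_{j,1,i} = (j+1,i)`. -/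
def D1 (b j : ℕ) : TS (ℕ × ℕ) Ev :=
  (TS.chain [Ev.o0, Ev.kj j, Ev.o2]).mapStates (fun i => (j + 1, i))

/-- The word of the gadget `T_{i,a}` (`a ∈ {0,1,2}`) of the translator `T`. -/
def Tword (b : ℕ) {m : ℕ} (φ : SatInstance m) (i : Fin m) (a : Fin 3) : List Ev :=
  if a = 0 then
    [Ev.kj (6 * (i : ℕ))] ++ List.replicate b (Ev.X ((φ.C i 0 : Fin m) : ℕ)) ++
    [Ev.x (i : ℕ)] ++ List.replicate b (Ev.X ((φ.C i 2 : Fin m) : ℕ)) ++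
    [Ev.kj (6 * (i : ℕ) + 1)]
  else if a = 1 then
    [Ev.kj (6 * (i : ℕ) + 2)] ++ List.replicate b (Ev.X ((φ.C i 1 : Fin m) : ℕ)) ++
    [Ev.p (i : ℕ), Ev.kj (6 * (i : ℕ) + 3)]
  else
    [Ev.kj (6 * (i : ℕ) + 4), Ev.x (i : ℕ), Ev.p (i : ℕ), Ev.kj (6 * (i : ℕ) + 5)]

/-- The gadget `T_{i,a}` of the translator `T`, with states `t_{i,a,pos} = (tag, pos)`. -/
def Tgad (b tag : ℕ) {m : ℕ} (φ : SatInstance m) (i : Fin m) (a : Fin 3) :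
    TS (ℕ × ℕ) Ev :=
  (TS.chain (Tword b φ i a)).mapStates (fun pos => (tag, pos))

/-- The translator `T = U(T_{0,0}, T_{0,1}, T_{0,2}, …, T_{m-1,2})` (standalone,
with `t_{i,a,pos} = (3i+a+1, pos)`). -/
def Ttrans (b : ℕ) {m : ℕ} (φ : SatInstance m) : TS (ℕ × ℕ) Ev :=
  TS.unionFam (fun q : Fin m × Fin 3 => Tgad b (3 * (q.1 : ℕ) + (q.2 : ℕ) + 1) φ q.1 q.2)

/-- `H_3`, with `h_{3,0,i} = (0,i)` and `h_{3,1,i} = (1,i)`: the union of the path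
`h_{3,0,0} --k^b--> h_{3,0,b}` and the path
`h_{3,0,0} --u--> h_{3,1,0} --k^{b-1}--> h_{3,1,b-1} --z--> h_{3,0,b}`. -/
def H3 (b : ℕ) : TS (ℕ × ℕ) Ev :=
  TS.unionFam (fun c : Bool =>
    if c then (TS.chain (List.replicate b Ev.k)).mapStates (fun i => (0, i))
    else (TS.chain ([Ev.u] ++ List.replicate (b-1) Ev.k ++ [Ev.z])).mapStates
      (fun i => if i = 0 then (0, 0) else if i = b + 1 then (0, b) else (1, i - 1)))

/-- The set `E_0 = {(m,m) : 1 ≤ m ≤ b} ∪ {0}`. -/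
def Ezero (b : ℕ) : Set Tev :=
  {e | (∃ q, 1 ≤ q ∧ q ≤ b ∧ e = Tev.pr q q) ∨ e = Tev.gr 0}

/-- The first row `f_{j,0,0} --k^b--> f_{j,0,b}` of `F_j`, with `f_{j,0,i} = (4j+2, i)`. -/
def Fch0 (b j : ℕ) : TS (ℕ × ℕ) Ev :=
  (TS.chain (List.replicate b Ev.k)).mapStates (fun i => (4 * j + 2, i))

/-- The second row `f_{j,0,0} --v_j--> f_{j,1,0} --k^{b-1}--> f_{j,1,b-1} --X_j--> f_{j,0,b}`
of `F_j`, with `f_{j,1,i} = (4j+3, i)`. -/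
def Fch1 (b j : ℕ) : TS (ℕ × ℕ) Ev :=
  (TS.chain ([Ev.vj j] ++ List.replicate (b-1) Ev.k ++ [Ev.X j])).mapStates
    (fun i => if i = 0 then (4 * j + 2, 0) else if i = b + 1 then (4 * j + 2, b)
      else (4 * j + 3, i - 1))

/-- `F_j` as the union of its two rows. -/
def Fgad (b j : ℕ) : TS (ℕ × ℕ) Ev :=
  TS.unionFam (fun c : Bool => if c then Fch0 b j else Fch1 b j)

/-- `G_j`, with `g_{j,i} = (4j+4, i)`. -/
def Ggad (b j : ℕ) : TS (ℕ × ℕ) Ev :=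
  (TS.chain (List.replicate b Ev.k ++ [Ev.X j])).mapStates (fun i => (4 * j + 4, i))

/-- The clause gadget `T_i` (of the translator for the group-extended types),
with `t_{i,pos} = (4i+5, pos)`. -/
def Tgad2 (b : ℕ) {m : ℕ} (φ : SatInstance m) (i : Fin m) : TS (ℕ × ℕ) Ev :=
  (TS.chain (List.replicate b Ev.k ++
    [Ev.X ((φ.C i 0 : Fin m) : ℕ), Ev.X ((φ.C i 1 : Fin m) : ℕ),
     Ev.X ((φ.C i 2 : Fin m) : ℕ), Ev.z] ++ List.replicate b Ev.k)).mapStates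
    (fun pos => (4 * (i : ℕ) + 5, pos))

/-- The translator `T_τ = U(F_0, G_0, …, F_{m-1}, G_{m-1}, T_0, …, T_{m-1})`
for the group-extended types. -/
def Ttrans2fam (b : ℕ) {m : ℕ} (φ : SatInstance m) : Fin m × Fin 3 → TS (ℕ × ℕ) Ev :=
  fun q => if q.2 = 0 then Fgad b (q.1 : ℕ)
    else if q.2 = 1 then Ggad b (q.1 : ℕ) else Tgad2 b φ q.1

def Ttrans2 (b : ℕ) {m : ℕ} (φ : SatInstance m) : TS (ℕ × ℕ) Ev :=
  TS.unionFam (Ttrans2fam b φ)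
/-! ## The key unions and the unions of key and translator -/

/-- The family of constituents of the key `K_{τ^b_0} = U(H_0, D_{0,0},…,D_{6m-1,0})`. -/
def K0fam (b m : ℕ) : Option (Fin (6 * m)) → TS (ℕ × ℕ) Ev
  | none => H0 b
  | some j => D0 b (j : ℕ)

def K0 (b m : ℕ) : TS (ℕ × ℕ) Ev := TS.unionFam (K0fam b m)

/-- The family of constituents of the key `K_{τ^b_1} = U(H_1, D_{0,1},…,D_{6m-1,1})`. -/
def K1fam (b m : ℕ) : Option (Fin (6 * m)) → TS (ℕ × ℕ) Ev
  | none => H1 b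
  | some j => D1 b (j : ℕ)

def K1 (b m : ℕ) : TS (ℕ × ℕ) Ev := TS.unionFam (K1fam b m)

/-- The family of constituents of the key `K = U(H_2, D_{0,1},…,D_{6m-1,1})`. -/
def K2fam (b m : ℕ) : Option (Fin (6 * m)) → TS (ℕ × ℕ) Ev
  | none => H2 b
  | some j => D1 b (j : ℕ)

def K2 (b m : ℕ) : TS (ℕ × ℕ) Ev := TS.unionFam (K2fam b m)

/-- The family of constituents of `U_{τ^b_0} = U(H_0, D_{0,0},…,D_{6m-1,0}, T)`. -/
def U0fam (b : ℕ) {m : ℕ} (φ : SatInstance m) :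
    Option (Fin (6 * m) ⊕ Fin m × Fin 3) → TS (ℕ × ℕ) Ev
  | none => H0 b
  | some (.inl j) => D0 b (j : ℕ)
  | some (.inr q) => Tgad b (6 * m + 1 + 3 * (q.1 : ℕ) + (q.2 : ℕ)) φ q.1 q.2

def U0 (b : ℕ) {m : ℕ} (φ : SatInstance m) : TS (ℕ × ℕ) Ev := TS.unionFam (U0fam b φ)

/-- The family of constituents of `U_{τ^b_1} = U(H_1, D_{0,1},…,D_{6m-1,1}, T)`. -/
def U1fam (b : ℕ) {m : ℕ} (φ : SatInstance m) :
    Option (Fin (6 * m) ⊕ Fin m × Fin 3) → TS (ℕ × ℕ) Ev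
  | none => H1 b
  | some (.inl j) => D1 b (j : ℕ)
  | some (.inr q) => Tgad b (6 * m + 1 + 3 * (q.1 : ℕ) + (q.2 : ℕ)) φ q.1 q.2

def U1 (b : ℕ) {m : ℕ} (φ : SatInstance m) : TS (ℕ × ℕ) Ev := TS.unionFam (U1fam b φ)

/-- The family of constituents of `W = U(H_2, D_{0,1},…,D_{6m-1,1}, T)`. -/
def Wfam (b : ℕ) {m : ℕ} (φ : SatInstance m) :
    Option (Fin (6 * m) ⊕ Fin m × Fin 3) → TS (ℕ × ℕ) Ev
  | none => H2 b
  | some (.inl j) => D1 b (j : ℕ)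
  | some (.inr q) => Tgad b (6 * m + 1 + 3 * (q.1 : ℕ) + (q.2 : ℕ)) φ q.1 q.2

def Wun (b : ℕ) {m : ℕ} (φ : SatInstance m) : TS (ℕ × ℕ) Ev := TS.unionFam (Wfam b φ)

/-- The family of constituents of
`U_τ = U(H_3, F_0, G_0, …, F_{m-1}, G_{m-1}, T_0, …, T_{m-1})` for `τ ∈ {τ^b_2, τ^b_3}`. -/
def U2fam (b : ℕ) {m : ℕ} (φ : SatInstance m) :
    Option (Fin m × Fin 3) → TS (ℕ × ℕ) Ev
  | none => H3 b
  | some q => Ttrans2fam b φ q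

def U2 (b : ℕ) {m : ℕ} (φ : SatInstance m) : TS (ℕ × ℕ) Ev := TS.unionFam (U2fam b φ)

/-! ## The joining `A(U)` -/

/-- The joining `A(U)` of a union `U = U(A_0,…,A_n)` of initialized TSs (`A_i`
initialized at `s0 i`): fresh connector states `q_i = Sum.inr i`, fresh events
`w_{i+1} = Sum.inr (Sum.inl i)` (`i : Fin n`) and `y_i = Sum.inr (Sum.inr i)`,
and transitions `q_i --w_{i+1}--> q_{i+1}` and `q_i --y_i--> s0 i`. -/
def joining {S E : Type} {n : ℕ} (F : Fin (n + 1) → TS S E) (s0 : Fin (n + 1) → S)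
    (h0 : ∀ i, s0 i ∈ (F i).states) :
    TS (S ⊕ Fin (n + 1)) (E ⊕ (Fin n ⊕ Fin (n + 1))) where
  states := {st | (∃ a ∈ (TS.unionFam F).states, st = Sum.inl a) ∨ ∃ q, st = Sum.inr q}
  events := {ev | (∃ e ∈ (TS.unionFam F).events, ev = Sum.inl e) ∨ ∃ c, ev = Sum.inr c}
  tr st ev st' :=
    (∃ a e a', (TS.unionFam F).tr a e a' ∧
        st = Sum.inl a ∧ ev = Sum.inl e ∧ st' = Sum.inl a') ∨
    (∃ i : Fin n, st = Sum.inr i.castSucc ∧ ev = Sum.inr (Sum.inl i) ∧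
        st' = Sum.inr i.succ) ∨
    (∃ i : Fin (n + 1), st = Sum.inr i ∧ ev = Sum.inr (Sum.inr i) ∧
        st' = Sum.inl (s0 i))
  tr_mem := by
    rintro st ev st' (⟨a, e, a', h, rfl, rfl, rfl⟩ | ⟨i, rfl, rfl, rfl⟩ | ⟨i, rfl, rfl, rfl⟩)
    · obtain ⟨h1, h2, h3⟩ := (TS.unionFam F).tr_mem h
      exact ⟨Or.inl ⟨a, h1, rfl⟩, Or.inl ⟨e, h2, rfl⟩, Or.inl ⟨a', h3, rfl⟩⟩
    · exact ⟨Or.inr ⟨_, rfl⟩, Or.inr ⟨_, rfl⟩, Or.inr ⟨_, rfl⟩⟩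
    · exact ⟨Or.inr ⟨_, rfl⟩, Or.inr ⟨_, rfl⟩,
        Or.inl ⟨_, Set.mem_iUnion.2 ⟨i, h0 i⟩, rfl⟩⟩

/-!
A one-in-three model `M` yields the signature `k ↦ (0,1)`, `X_v ↦ 1` or `0` according as
`v ∈ M` or not, `v_j ↦ 0` if `X_j ∈ M` and `(0,1)` otherwise, and `0` for every other event.
Every constituent of `T_τ` is a path (`F_j` two paths with common ends), so the support of a
state can be taken to be the value reached by firing, from `0`, the word leading to it along its
path. This is a region as soon as these words fire in `τ` and the two rows of `F_j` end at the
same value: both end at `b`, whether `X_j ∈ M` or not. In `T_i` the three variable events add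
exactly `1` modulo `b + 1`, since `M` meets `C_i` once; this brings `b` back to `0`, so that the
final `k^b` can fire.
-/

section Run

variable {E : Type} (b : ℕ) (sig : E → Tev)

def tevRun (v : ℕ) (w : List E) : Option ℕ :=
  w.foldlM (fun s e => tevStep b s (sig e)) v

variable {b sig}

@[simp]
lemma tevRun_nil (v : ℕ) : tevRun b sig v [] = some v := rfl

@[simp]
lemma tevRun_cons (v : ℕ) (e : E) (w : List E) :
    tevRun b sig v (e :: w) = (tevStep b v (sig e)).bind (tevRun b sig · w) := rfl

lemma tevRun_append (v : ℕ) (w₁ w₂ : List E) :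
    tevRun b sig v (w₁ ++ w₂) = (tevRun b sig v w₁).bind (tevRun b sig · w₂) :=
  List.foldlM_append

lemma tevRun_replicate {e : E} (he : sig e = .pr 0 1) {v n : ℕ} (h : v + n ≤ b) :
    tevRun b sig v (List.replicate n e) = some (v + n) := by
  induction n generalizing v with
  | zero => rfl
  | succ n ih =>
    have hstep : tevStep b v (sig e) = some (v + 1) := by
      rw [he, tevStep, if_pos (by omega)]
      rfl
    rw [List.replicate_succ, tevRun_cons, hstep, Option.bind_some, ih (by omega),
      Nat.add_right_comm]
    rfl

lemma tevStep_le {s s' : ℕ} {e : Tev} (h : tevStep b s e = some s') : s' ≤ b := by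
  cases e with
  | pr m n =>
    simp only [tevStep] at h
    split_ifs at h with hs
    cases h
    exact hs.2
  | gr c =>
    cases h
    exact Nat.le_of_lt_succ (Nat.mod_lt _ b.succ_pos)

lemma tevRun_getD_le {v : ℕ} (hv : v ≤ b) (w : List E) : (tevRun b sig v w).getD 0 ≤ b := by
  induction w generalizing v with
  | nil => exact hv
  | cons e w ih =>
    rw [tevRun_cons]
    cases h : tevStep b v (sig e) with
    | none => exact Nat.zero_le b
    | some v' => exact ih (tevStep_le h)

lemma tevRun_take_add_one {w : List E} {a : ℕ} {e : E} (h : w[a]? = some e) (v : ℕ) :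
    tevRun b sig v (w.take (a + 1)) = (tevRun b sig v (w.take a)).bind (tevStep b · (sig e)) := by
  rw [List.take_add_one, h, Option.toList_some, tevRun_append]
  cases tevRun b sig v (w.take a) <;> simp

lemma isSome_tevRun_take {v : ℕ} {w : List E} (h : (tevRun b sig v w).isSome) (i : ℕ) :
    (tevRun b sig v (w.take i)).isSome := by
  rw [← List.take_append_drop i w, tevRun_append] at h
  cases hi : tevRun b sig v (w.take i) <;> simp_all

end Run

section Respects

variable {S E : Type}

def TS.Respects (A : TS S E) (b : ℕ) (sup : S → ℕ) (sig : E → Tev) : Prop :=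
  ∀ ⦃s e s'⦄, A.tr s e s' → tevStep b (sup s) (sig e) = some (sup s')

variable {b : ℕ} {sup : S → ℕ} {sig : E → Tev}

lemma TS.Respects.unionFam {ι : Type} {F : ι → TS S E} (hF : ∀ i, (F i).Respects b sup sig) :
    (TS.unionFam F).Respects b sup sig :=
  fun _ _ _ ⟨i, h⟩ => hF i h

lemma TS.Respects.chain_mapStates {w : List E} {f : ℕ → S} {v : ℕ}
    (hw : (tevRun b sig v w).isSome)
    (hf : ∀ i ≤ w.length, sup (f i) = (tevRun b sig v (w.take i)).getD 0) :
    ((TS.chain w).mapStates f).Respects b sup sig := by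
  rintro _ e _ ⟨a, _, ⟨he, rfl⟩, rfl, rfl⟩
  have ha : a < w.length := (List.getElem?_eq_some_iff.mp he).1
  obtain ⟨u, hu⟩ := Option.isSome_iff_exists.mp (isSome_tevRun_take hw a)
  obtain ⟨u', hu'⟩ := Option.isSome_iff_exists.mp (isSome_tevRun_take hw (a + 1))
  rw [tevRun_take_add_one he, hu, Option.bind_some] at hu'
  rw [hf a ha.le, hf (a + 1) ha, tevRun_take_add_one he, hu, Option.bind_some, hu',
    Option.getD_some, Option.getD_some, hu']

end Respects

lemma Fintype.sum_boole_eq_one_of_existsUnique {α : Type*} [Fintype α] {p : α → Prop}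
    [DecidablePred p] (h : ∃! a, p a) : ∑ a, (if p a then 1 else 0) = 1 := by
  rw [Finset.sum_boole, Nat.cast_id, Finset.card_eq_one_iff_existsUnique]
  simpa using h

section Translator

variable (b : ℕ) {m : ℕ} (φ : SatInstance m) (N : Set ℕ) [DecidablePred (· ∈ N)]

def translatorSig : Ev → Tev
  | .k => .pr 0 1
  | .vj j => if j ∈ N then .gr 0 else .pr 0 1
  | .X v => .gr (if v ∈ N then 1 else 0)
  | _ => .gr 0

def fch1Word (j : ℕ) : List Ev := [Ev.vj j] ++ List.replicate (b - 1) Ev.k ++ [Ev.X j]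

def ggadWord (j : ℕ) : List Ev := List.replicate b Ev.k ++ [Ev.X j]

def tgad2Word (i : Fin m) : List Ev :=
  List.replicate b Ev.k ++
    [Ev.X ((φ.C i 0 : Fin m) : ℕ), Ev.X ((φ.C i 1 : Fin m) : ℕ),
     Ev.X ((φ.C i 2 : Fin m) : ℕ), Ev.z] ++ List.replicate b Ev.k

/-- The word leading to a state of `Ttrans2 b φ` along its row; the state `(4j+3, p)` of the
second row of `F_j` is reached after `p + 1` of its events. -/
def translatorPrefix (st : ℕ × ℕ) : List Ev :=
  let j := (st.1 - 2) / 4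
  match (st.1 - 2) % 4 with
  | 0 => (List.replicate b Ev.k).take st.2
  | 1 => (fch1Word b j).take (st.2 + 1)
  | 2 => (ggadWord b j).take st.2
  | _ => if h : j < m then (tgad2Word b φ ⟨j, h⟩).take st.2 else []

def translatorSup (st : ℕ × ℕ) : ℕ :=
  (tevRun b (translatorSig N) 0 (translatorPrefix b φ st)).getD 0

lemma translatorPrefix_fch0 (j pos : ℕ) :
    translatorPrefix b φ (4 * j + 2, pos) = (List.replicate b Ev.k).take pos := by
  simp [translatorPrefix]

lemma translatorPrefix_fch1 (j pos : ℕ) :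
    translatorPrefix b φ (4 * j + 3, pos) = (fch1Word b j).take (pos + 1) := by
  simp [translatorPrefix, show (4 * j + 1) / 4 = j by omega]

lemma translatorPrefix_ggad (j pos : ℕ) :
    translatorPrefix b φ (4 * j + 4, pos) = (ggadWord b j).take pos := by
  simp [translatorPrefix, show (4 * j + 2) / 4 = j by omega]

lemma translatorPrefix_tgad2 (i : Fin m) (pos : ℕ) :
    translatorPrefix b φ (4 * i + 5, pos) = (tgad2Word b φ i).take pos := by
  simp [translatorPrefix, show (4 * (i : ℕ) + 3) / 4 = i by omega]

lemma translatorSup_le (st : ℕ × ℕ) : translatorSup b φ N st ≤ b :=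
  tevRun_getD_le (Nat.zero_le b) _

lemma translatorSig_ok {t : ℕ} (hb : 1 ≤ b) (ht : t = 2 ∨ t = 3) (e : Ev) :
    tevOk b t (translatorSig N e) := by
  have hgr : ∀ c ≤ 1, tevOk b t (.gr c) := fun c hc => ⟨by omega, ht⟩
  have hk : tevOk b t (.pr 0 1) := ⟨by omega, hb, fun _ => .inl rfl, by simp⟩
  cases e <;> simp only [translatorSig] <;> (try split_ifs) <;> first | exact hk | exact hgr _ (by omega)

variable {b}

lemma tevRun_replicate_k {v n : ℕ} (h : v + n ≤ b) :
    tevRun b (translatorSig N) v (List.replicate n Ev.k) = some (v + n) :=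
  tevRun_replicate (e := Ev.k) rfl h

@[simp]
lemma tevStep_translatorSig_X (v i : ℕ) :
    tevStep b v (translatorSig N (Ev.X i)) = some ((v + if i ∈ N then 1 else 0) % (b + 1)) :=
  rfl

@[simp]
lemma tevStep_translatorSig_z (v : ℕ) :
    tevStep b v (translatorSig N Ev.z) = some (v % (b + 1)) :=
  rfl

lemma tevRun_fch1Word (hb : 1 ≤ b) (j : ℕ) :
    tevRun b (translatorSig N) 0 (fch1Word b j) = some b := by
  have hb' : b - 1 + 1 = b := Nat.sub_add_cancel hb
  by_cases hj : j ∈ N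
  · simp [fch1Word, tevRun_append, tevRun_replicate_k, translatorSig, hj, tevStep, hb']
  · simp [fch1Word, tevRun_append, tevRun_replicate_k (v := 1) (n := b - 1) (by omega),
      translatorSig, hj, tevStep, hb, add_comm 1, hb']

lemma tevRun_ggadWord (j : ℕ) : (tevRun b (translatorSig N) 0 (ggadWord b j)).isSome := by
  simp [ggadWord, tevRun_append, tevRun_replicate_k]

lemma tevRun_tgad2Word (i : Fin m) (hi : ∃! r, (φ.C i r : ℕ) ∈ N) :
    tevRun b (translatorSig N) 0 (tgad2Word b φ i) = some b := by
  have h := Fintype.sum_boole_eq_one_of_existsUnique hi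
  rw [Fin.sum_univ_three, add_assoc] at h
  simp [tgad2Word, tevRun_append, tevRun_replicate_k, Nat.mod_add_mod, add_assoc, h]

lemma fch0_respects (j : ℕ) : (Fch0 b j).Respects b (translatorSup b φ N) (translatorSig N) :=
  TS.Respects.chain_mapStates (v := 0) (by simp [tevRun_replicate_k])
    fun i _ => by rw [translatorSup, translatorPrefix_fch0]

lemma fch1_respects (hb : 1 ≤ b) (j : ℕ) :
    (Fch1 b j).Respects b (translatorSup b φ N) (translatorSig N) := by
  have hrun := tevRun_fch1Word N hb j
  refine TS.Respects.chain_mapStates (w := fch1Word b j) (v := 0) (by simp [hrun]) ?_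
  intro i hi
  have hlen : (fch1Word b j).length = b + 1 := by simp [fch1Word]; omega
  simp only [translatorSup]
  split_ifs with h0 hend
  · simp [h0, translatorPrefix_fch0]
  · rw [hend, ← hlen, List.take_length, translatorPrefix_fch0, hrun,
      List.take_of_length_le (by simp), tevRun_replicate_k N (Nat.zero_add b).le, Nat.zero_add]
  · rw [translatorPrefix_fch1, Nat.sub_add_cancel (Nat.one_le_iff_ne_zero.2 h0)]

lemma fgad_respects (hb : 1 ≤ b) (j : ℕ) :
    (Fgad b j).Respects b (translatorSup b φ N) (translatorSig N) :=
  TS.Respects.unionFam fun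
    | true => fch0_respects φ N j
    | false => fch1_respects φ N hb j

lemma ggad_respects (j : ℕ) : (Ggad b j).Respects b (translatorSup b φ N) (translatorSig N) :=
  TS.Respects.chain_mapStates (w := ggadWord b j) (v := 0) (tevRun_ggadWord N j)
    fun i _ => by rw [translatorSup, translatorPrefix_ggad]

lemma tgad2_respects (i : Fin m) (hi : ∃! r, (φ.C i r : ℕ) ∈ N) :
    (Tgad2 b φ i).Respects b (translatorSup b φ N) (translatorSig N) :=
  TS.Respects.chain_mapStates (w := tgad2Word b φ i) (v := 0)
    (by simp [tevRun_tgad2Word φ N i hi])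
    fun pos _ => by rw [translatorSup, translatorPrefix_tgad2]

lemma ttrans2_respects (hb : 1 ≤ b) (hN : ∀ i, ∃! r, (φ.C i r : ℕ) ∈ N) :
    (Ttrans2 b φ).Respects b (translatorSup b φ N) (translatorSig N) := by
  refine TS.Respects.unionFam fun ⟨i, r⟩ => ?_
  simp only [Ttrans2fam]
  split_ifs
  exacts [fgad_respects φ N hb i, ggad_respects φ N i, tgad2_respects φ N i (hN i)]

def translatorRegion {t : ℕ} (hb : 1 ≤ b) (ht : t = 2 ∨ t = 3)
    (hN : ∀ i, ∃! r, (φ.C i r : ℕ) ∈ N) : Region b t (Ttrans2 b φ) where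
  sup := translatorSup b φ N
  sig := translatorSig N
  sup_le s _ := translatorSup_le b φ N s
  sig_ok e _ := translatorSig_ok b N hb ht e
  resp := ttrans2_respects φ N hb hN

end Translator

theorem stmt12_general (b t : ℕ) (hb : 2 ≤ b) (ht : t = 2 ∨ t = 3)
    {m : ℕ} (φ : SatInstance m)
    (hmod : ∃ M : Set (Fin m), φ.model M) :
    ∃ R : Region b t (Ttrans2 b φ), R.sig Ev.z = Tev.gr 0 ∧ R.sig Ev.k = Tev.pr 0 1 := by
  classical
  obtain ⟨M, hM⟩ := hmod
  have hN : ∀ i, ∃! r, (φ.C i r : ℕ) ∈ Fin.val '' M := by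
    simpa only [Fin.val_injective.mem_set_image] using fun i => hM i
  exact ⟨translatorRegion φ (Fin.val '' M) (by omega) ht hN, rfl, rfl⟩

/-- Existence for the translator `T_τ`, `τ ∈ {τ^b_2, τ^b_3}`:
if `φ` has a one-in-three model, then some `τ`-region of `T_τ` satisfies
`sig(z) = 0` (the group event `0`) and `sig(k) = (0,1)`. -/
theorem stmt12 (b t : ℕ) (hb : 2 ≤ b) (ht : t = 2 ∨ t = 3)
    {m : ℕ} (hm : 1 ≤ m) (φ : SatInstance m)
    (hmod : ∃ M : Set (Fin m), φ.model M) :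
    ∃ R : Region b t (Ttrans2 b φ), R.sig Ev.z = Tev.gr 0 ∧ R.sig Ev.k = Tev.pr 0 1 :=
  stmt12_general b t hb ht φ hmod
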